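/- arXiv:2301.12290 — 2 statements merged into one kernel-verified Lean document; each statement's English description precedes it below -/
import Mathlib

section
/- Let d = 1, 0 < α < 2, and let D ⊆ ℝ be an open set which is a union of open intervals each of length at least 2r and pairwise at distance at least 2r. Then for every x ∈ D, ι_D(x) - κ_D(x) ≤ 2 ∫_{2r}^{∞} A_{1,α} s^{-1-α} ds = (2 A_{1,α}/α) (2r)^{-α}. -/
open MeasureTheory Set
open scoped ENNReal

/-- `D_x = {y ∈ D : [x,y] ⊆ D}`. -/
def visSet {E : Type*} [AddCommGroup E] [Module ℝ E] (D : Set E) (x : E) : Set E :=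
  {y ∈ D | segment ℝ x y ⊆ D}

/-- The `α`-stable Lévy density constant `A_{d,α}`. -/
noncomputable def stableConst (d : ℕ) (α : ℝ) : ℝ :=
  2 ^ α * Real.Gamma ((d + α) / 2) * Real.pi ^ (-(d : ℝ) / 2) / |Real.Gamma (-α / 2)|

lemma lintegral_comp_neg_real (h : ℝ → ℝ≥0∞) : ∫⁻ y, h (-y) = ∫⁻ y, h y := by
  conv_rhs => rw [← Measure.map_neg_eq_self (volume : Measure ℝ)]
  exact (MeasureTheory.lintegral_map_equiv h (MeasurableEquiv.neg ℝ)).symm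

lemma stableConst_nonneg (d : ℕ) {α : ℝ} (hα : 0 < α) : 0 ≤ stableConst d α := by
  unfold stableConst
  apply div_nonneg _ (abs_nonneg _)
  have h1 : (0:ℝ) ≤ 2 ^ α := Real.rpow_nonneg (by norm_num) _
  have h2 : (0:ℝ) ≤ Real.pi ^ (-(d : ℝ) / 2) := Real.rpow_nonneg Real.pi_pos.le _
  have h : (0:ℝ) < ((d : ℝ) + α) / 2 := by positivity
  exact mul_nonneg (mul_nonneg h1 (Real.Gamma_pos_of_pos h).le) h2

/-- In dimension one, if `D ⊆ ℝ` is a union of open intervals each of length at least `2r`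
and pairwise at distance at least `2r`, then for every `x ∈ D`,
`ι_D(x) - κ_D(x) ≤ 2 ∫_{2r}^∞ A_{1,α} s^{-1-α} ds = (2 A_{1,α}/α) (2r)^{-α}`. -/
theorem intensity_difference_dim_one {α r : ℝ} (hα : 0 < α) (hα2 : α < 2) (hr : 0 < r)
    {ι : Type*} (a b : ι → ℝ) (D : Set ℝ)
    (hlen : ∀ i, 2 * r ≤ b i - a i)
    (hsep : ∀ i j, i ≠ j → ∀ u ∈ Ioo (a i) (b i), ∀ v ∈ Ioo (a j) (b j), 2 * r ≤ |u - v|)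
    (hD : D = ⋃ i, Ioo (a i) (b i))
    (x : ℝ) (hx : x ∈ D) :
    ((∫⁻ y in (visSet D x)ᶜ, ENNReal.ofReal (stableConst 1 α * |y - x| ^ (-1 - α))) -
        ∫⁻ y in Dᶜ, ENNReal.ofReal (stableConst 1 α * |y - x| ^ (-1 - α))) ≤
      ENNReal.ofReal (2 * ∫ s in Ioi (2 * r), stableConst 1 α * s ^ (-1 - α)) ∧
    2 * ∫ s in Ioi (2 * r), stableConst 1 α * s ^ (-1 - α) =
      2 * stableConst 1 α / α * (2 * r) ^ (-α) := by
  set A := stableConst 1 α with hAdef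
  have hA : 0 ≤ A := stableConst_nonneg 1 hα
  have he : (-1 - α) < -1 := by linarith
  have h2r : (0:ℝ) < 2 * r := by linarith
  set f : ℝ → ℝ≥0∞ := fun y => ENNReal.ofReal (A * |y - x| ^ (-1 - α)) with hfdef
  set g : ℝ → ℝ≥0∞ := fun s => ENNReal.ofReal (A * |s| ^ (-1 - α)) with hgdef
  -- integrability of the comparison function
  have hInt : IntegrableOn (fun s => A * s ^ (-1 - α)) (Ioi (2 * r)) :=
    (integrableOn_Ioi_rpow_of_lt he h2r).const_mul A
  have hnn : 0 ≤ᵐ[volume.restrict (Ioi (2 * r))] fun s => A * s ^ (-1 - α) :=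
    (ae_restrict_iff' measurableSet_Ioi).2 (ae_of_all _ fun s hs =>
      mul_nonneg hA (Real.rpow_nonneg (le_of_lt (h2r.trans hs)) _))
  have hI : (0:ℝ) ≤ ∫ s in Ioi (2 * r), A * s ^ (-1 - α) := integral_nonneg_of_ae hnn
  -- value of the one-sided integral, as lintegral
  have hval : ∫⁻ s in Ioi (2 * r), g s
      = ENNReal.ofReal (∫ s in Ioi (2 * r), A * s ^ (-1 - α)) := by
    rw [setLIntegral_congr_fun measurableSet_Ioi (
      (fun s (hs : s ∈ Ioi (2*r)) => by
        show g s = ENNReal.ofReal (A * s ^ (-1 - α))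
        rw [hgdef]; simp only; rw [abs_of_pos (h2r.trans hs)]))]
    exact (ofReal_integral_eq_lintegral_ofReal hInt hnn).symm
  have hIciIoi : ∫⁻ s in Ici (2 * r), g s = ∫⁻ s in Ioi (2 * r), g s := by
    rw [Measure.restrict_congr_set Ioi_ae_eq_Ici]
  -- translation for the right piece
  have hR : ∫⁻ y in Ici (x + 2 * r), f y = ∫⁻ s in Ici (2 * r), g s := by
    rw [← lintegral_indicator measurableSet_Ici, ← lintegral_indicator measurableSet_Ici]
    have step : ∀ y : ℝ, (Ici (x + 2 * r)).indicator f y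
        = (Ici (2 * r)).indicator g (y + (-x)) := by
      intro y
      have hmem : y ∈ Ici (x + 2 * r) ↔ y + (-x) ∈ Ici (2 * r) := by
        simp only [mem_Ici]; constructor <;> intro <;> linarith
      have hfg : f y = g (y + (-x)) := by
        rw [hfdef, hgdef]; simp only; rw [← sub_eq_add_neg]
      simp only [Set.indicator_apply]
      rw [hfg]
      exact if_congr hmem rfl rfl
    rw [lintegral_congr step]
    exact lintegral_add_right_eq_self (fun s => (Ici (2 * r)).indicator g s) (-x)
  -- reflection for the left piece
  have hL : ∫⁻ y in Iic (x - 2 * r), f y = ∫⁻ s in Ici (2 * r), g s := by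
    rw [← lintegral_indicator measurableSet_Iic, ← lintegral_indicator measurableSet_Ici]
    have step : ∀ y : ℝ, (Iic (x - 2 * r)).indicator f y
        = (Ici (2 * r)).indicator g (x - y) := by
      intro y
      have hmem : y ∈ Iic (x - 2 * r) ↔ x - y ∈ Ici (2 * r) := by
        simp only [mem_Iic, mem_Ici]; constructor <;> intro <;> linarith
      have hfg : f y = g (x - y) := by
        rw [hfdef, hgdef]; simp only; rw [abs_sub_comm]
      simp only [Set.indicator_apply]
      rw [hfg]
      exact if_congr hmem rfl rfl
    rw [lintegral_congr step]
    calc ∫⁻ y, (Ici (2 * r)).indicator g (x - y)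
        = ∫⁻ y, (fun z => (Ici (2 * r)).indicator g (x + z)) (-y) := by
          apply lintegral_congr; intro y; rw [sub_eq_add_neg]
      _ = ∫⁻ y, (Ici (2 * r)).indicator g (x + y) :=
          lintegral_comp_neg_real (fun z => (Ici (2 * r)).indicator g (x + z))
      _ = ∫⁻ s, (Ici (2 * r)).indicator g s :=
          lintegral_add_left_eq_self (fun s => (Ici (2 * r)).indicator g s) x
  -- geometry
  obtain ⟨i, hxi⟩ : ∃ i, x ∈ Ioo (a i) (b i) := by
    rw [hD] at hx; exact mem_iUnion.1 hx
  have hIi_sub : Ioo (a i) (b i) ⊆ visSet D x := by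
    intro y hy
    refine ⟨by rw [hD]; exact mem_iUnion.2 ⟨i, hy⟩, ?_⟩
    intro z hz
    rw [hD]
    exact mem_iUnion.2 ⟨i, (convex_Ioo (a i) (b i)).segment_subset hxi hy hz⟩
  have hfar : D \ visSet D x ⊆ Iic (x - 2 * r) ∪ Ici (x + 2 * r) := by
    rintro y ⟨hyD, hyv⟩
    obtain ⟨j, hyj⟩ : ∃ j, y ∈ Ioo (a j) (b j) := by
      rw [hD] at hyD; exact mem_iUnion.1 hyD
    have hji : j ≠ i := fun h => hyv (hIi_sub (h ▸ hyj))
    have hd := hsep j i hji y hyj x hxi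
    rcases le_abs.1 hd with h | h
    · right; simp only [mem_Ici]; linarith
    · left; simp only [mem_Iic]; linarith
  -- combine
  have hsubset : (visSet D x)ᶜ ⊆ Dᶜ ∪ (D \ visSet D x) := by
    intro y hy
    by_cases hyD : y ∈ D
    · exact Or.inr ⟨hyD, hy⟩
    · exact Or.inl hyD
  have h1 : ∫⁻ y in (visSet D x)ᶜ, f y
      ≤ (∫⁻ y in Dᶜ, f y) + ∫⁻ y in D \ visSet D x, f y :=
    le_trans (lintegral_mono_set hsubset) (lintegral_union_le _ _ _)
  have h2 : ∫⁻ y in D \ visSet D x, f y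
      ≤ ENNReal.ofReal (2 * ∫ s in Ioi (2 * r), A * s ^ (-1 - α)) := by
    calc ∫⁻ y in D \ visSet D x, f y
        ≤ ∫⁻ y in Iic (x - 2 * r) ∪ Ici (x + 2 * r), f y := lintegral_mono_set hfar
      _ ≤ (∫⁻ y in Iic (x - 2 * r), f y) + ∫⁻ y in Ici (x + 2 * r), f y :=
          lintegral_union_le _ _ _
      _ = ENNReal.ofReal (∫ s in Ioi (2 * r), A * s ^ (-1 - α))
          + ENNReal.ofReal (∫ s in Ioi (2 * r), A * s ^ (-1 - α)) := by
          rw [hL, hR, hIciIoi, hval]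
      _ = ENNReal.ofReal (2 * ∫ s in Ioi (2 * r), A * s ^ (-1 - α)) := by
          rw [← ENNReal.ofReal_add hI hI]; congr 1; ring
  constructor
  · refine tsub_le_iff_right.2 ?_
    calc ∫⁻ y in (visSet D x)ᶜ, f y
        ≤ (∫⁻ y in Dᶜ, f y) + ∫⁻ y in D \ visSet D x, f y := h1
      _ ≤ (∫⁻ y in Dᶜ, f y)
          + ENNReal.ofReal (2 * ∫ s in Ioi (2 * r), A * s ^ (-1 - α)) :=
          add_le_add_right h2 _
      _ = ENNReal.ofReal (2 * ∫ s in Ioi (2 * r), A * s ^ (-1 - α))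
          + ∫⁻ y in Dᶜ, f y := add_comm _ _
  · rw [integral_const_mul, integral_Ioi_rpow_of_lt he h2r]
    have hexp : (-1 - α) + 1 = -α := by ring
    rw [hexp]
    field_simp
end

section
/- For a nonconvex open set D ⊆ ℝ^d that is C^{1,1} (admits inner and outer tangent balls of radius r₀ at each boundary point), there exist points x, y ∈ D and a radius r > 0 such that B(x,r) ⊆ D, B(y,r) ⊆ D, and for every z ∈ B(x,r) and w ∈ B(y,r) the segment [z,w] intersects the interior of Dᶜ; in particular dist(B(x,r), B(y,r)) > 0. -/
open Metric Set

/-- Auxiliary: if `a, b ∈ D` and some point of the segment `[a,b]` lies in `interior Dᶜ`,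
then the conclusion of the main theorem holds. -/
lemma aux_separated_balls {E : Type*} [NormedAddCommGroup E] [NormedSpace ℝ E]
    (D : Set E) (hD : IsOpen D) {a b q : E} (ha : a ∈ D) (hb : b ∈ D)
    (hq : q ∈ segment ℝ a b) (hqi : q ∈ interior Dᶜ) :
    ∃ (x y : E) (r : ℝ), 0 < r ∧
      ball x r ⊆ D ∧ ball y r ⊆ D ∧
      (∀ z ∈ ball x r, ∀ w ∈ ball y r,
        (segment ℝ z w ∩ interior Dᶜ).Nonempty) ∧
      ∃ δ : ℝ, 0 < δ ∧ ∀ z ∈ ball x r, ∀ w ∈ ball y r, δ ≤ dist z w := by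
  have hqD : q ∉ D := fun h => interior_subset hqi h
  have hab : a ≠ b := by
    rintro rfl
    rw [segment_same] at hq
    exact hqD (hq ▸ ha)
  have hd : 0 < dist a b := dist_pos.2 hab
  obtain ⟨ε, hε, hball⟩ := Metric.isOpen_iff.1 isOpen_interior q hqi
  obtain ⟨ρa, hρa, hba⟩ := Metric.isOpen_iff.1 hD a ha
  obtain ⟨ρb, hρb, hbb⟩ := Metric.isOpen_iff.1 hD b hb
  set r : ℝ := min (min ρa ρb) (min (ε / 2) (dist a b / 4)) with hr_def
  have hr : 0 < r := lt_min (lt_min hρa hρb) (lt_min (by linarith) (by linarith))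
  have hrρa : r ≤ ρa := le_trans (min_le_left _ _) (min_le_left _ _)
  have hrρb : r ≤ ρb := le_trans (min_le_left _ _) (min_le_right _ _)
  have hrε : r ≤ ε / 2 := le_trans (min_le_right _ _) (min_le_left _ _)
  have hrd : r ≤ dist a b / 4 := le_trans (min_le_right _ _) (min_le_right _ _)
  refine ⟨a, b, r, hr, (ball_subset_ball hrρa).trans hba,
    (ball_subset_ball hrρb).trans hbb, ?_, dist a b / 2, by linarith, ?_⟩
  · intro z hz w hw
    obtain ⟨ua, ub, hua, hub, huab, hqe⟩ := hq
    refine ⟨ua • z + ub • w, ⟨ua, ub, hua, hub, huab, rfl⟩, hball ?_⟩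
    rw [mem_ball, dist_eq_norm]
    have he : ua • z + ub • w - q = ua • (z - a) + ub • (w - b) := by
      rw [← hqe]; module
    rw [he]
    have h1 : ‖z - a‖ < r := by rwa [← dist_eq_norm, ← mem_ball]
    have h2 : ‖w - b‖ < r := by rwa [← dist_eq_norm, ← mem_ball]
    calc ‖ua • (z - a) + ub • (w - b)‖ ≤ ‖ua • (z - a)‖ + ‖ub • (w - b)‖ := norm_add_le _ _
      _ = ua * ‖z - a‖ + ub * ‖w - b‖ := by
          rw [norm_smul, norm_smul, Real.norm_of_nonneg hua, Real.norm_of_nonneg hub]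
      _ ≤ ua * r + ub * r :=
          add_le_add (mul_le_mul_of_nonneg_left h1.le hua)
            (mul_le_mul_of_nonneg_left h2.le hub)
      _ < ε := by nlinarith
  · intro z hz w hw
    rw [mem_ball] at hz hw
    have h4 := dist_triangle4 a z w b
    rw [dist_comm z a] at hz
    linarith

/-- For a nonconvex open set `D ⊆ ℝ^d` which is `C^{1,1}` at scale `r₀` (inner and outer
tangent balls of radius `r₀` at each boundary point), there are points `x, y ∈ D` and a
radius `r > 0` with `B(x,r) ⊆ D`, `B(y,r) ⊆ D`, such that for all `z ∈ B(x,r)` and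
`w ∈ B(y,r)` the segment `[z,w]` meets the interior of `Dᶜ`; in particular the two balls
are at positive distance. -/
theorem nonconvex_C11_separated_balls {d : ℕ} (D : Set (EuclideanSpace ℝ (Fin d)))
    (hD : IsOpen D) {r₀ : ℝ} (hr₀ : 0 < r₀)
    (hnonconv : ∃ x ∈ D, ∃ y ∈ D, ¬ segment ℝ x y ⊆ D)
    (hC11 : ∀ Q ∈ frontier D, ∃ x' x'' : EuclideanSpace ℝ (Fin d),
      ball x' r₀ ⊆ D ∧ ball x'' r₀ ⊆ Dᶜ ∧ dist Q x' = r₀ ∧ dist Q x'' = r₀) :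
    ∃ (x y : EuclideanSpace ℝ (Fin d)) (r : ℝ), 0 < r ∧
      ball x r ⊆ D ∧ ball y r ⊆ D ∧
      (∀ z ∈ ball x r, ∀ w ∈ ball y r,
        (segment ℝ z w ∩ interior Dᶜ).Nonempty) ∧
      ∃ δ : ℝ, 0 < δ ∧ ∀ z ∈ ball x r, ∀ w ∈ ball y r, δ ≤ dist z w := by
  obtain ⟨x, hx, y, hy, hseg⟩ := hnonconv
  rw [not_subset] at hseg
  obtain ⟨p, hpseg, hpD⟩ := hseg
  by_cases hpi : p ∈ interior Dᶜ
  · exact aux_separated_balls D hD hx hy hpseg hpi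
  · -- p is on the frontier of D; use the outer tangent ball and translate.
    have hpfr : p ∈ frontier D := by
      rw [frontier_eq_closure_inter_closure]
      refine ⟨?_, subset_closure hpD⟩
      rw [interior_compl] at hpi
      simpa using hpi
    obtain ⟨x', x'', _, houter, _, hdist⟩ := hC11 p hpfr
    have hint : ball x'' r₀ ⊆ interior Dᶜ := interior_maximal houter isOpen_ball
    set v : EuclideanSpace ℝ (Fin d) := x'' - p with hv_def
    have hvnorm : ‖v‖ = r₀ := by
      rw [hv_def, ← dist_eq_norm, dist_comm]; exact hdist
    obtain ⟨ρx, hρx, hbx⟩ := Metric.isOpen_iff.1 hD x hx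
    obtain ⟨ρy, hρy, hby⟩ := Metric.isOpen_iff.1 hD y hy
    set c : ℝ := min ρx ρy with hc_def
    have hc : 0 < c := lt_min hρx hρy
    set t : ℝ := min (c / (2 * r₀)) (1 / 2) with ht_def
    have ht : 0 < t := lt_min (by positivity) (by norm_num)
    have ht1 : t ≤ 1 / 2 := min_le_right _ _
    have htc : t * r₀ ≤ c / 2 := by
      have h := min_le_left (c / (2 * r₀)) (1 / 2)
      calc t * r₀ ≤ c / (2 * r₀) * r₀ := by gcongr
        _ = c / 2 := by field_simp
    have htv : ‖t • v‖ = t * r₀ := by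
      rw [norm_smul, Real.norm_of_nonneg ht.le, hvnorm]
    have ha : x + t • v ∈ D := by
      apply hbx
      rw [mem_ball, dist_eq_norm, add_sub_cancel_left, htv]
      calc t * r₀ ≤ c / 2 := htc
        _ < c := by linarith
        _ ≤ ρx := min_le_left _ _
    have hb : y + t • v ∈ D := by
      apply hby
      rw [mem_ball, dist_eq_norm, add_sub_cancel_left, htv]
      calc t * r₀ ≤ c / 2 := htc
        _ < c := by linarith
        _ ≤ ρy := min_le_right _ _
    have hqi : p + t • v ∈ interior Dᶜ := by
      apply hint
      rw [mem_ball, dist_eq_norm]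
      have he : p + t • v - x'' = (t - 1) • v := by rw [hv_def]; module
      rw [he, norm_smul, Real.norm_of_nonpos (by linarith), hvnorm]
      nlinarith
    have hq : p + t • v ∈ segment ℝ (x + t • v) (y + t • v) := by
      obtain ⟨ua, ub, hua, hub, huab, hpe⟩ := hpseg
      refine ⟨ua, ub, hua, hub, huab, ?_⟩
      have hub' : ub = 1 - ua := by linarith
      subst hub'
      rw [← hpe]; module
    exact aux_separated_balls D hD ha hb hq hqi
end
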